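/- Partitions λ₁, …, λ_k (possibly of different sizes) share at least r common distinct row lengths if and only if they can be written as λⱼ = μⱼ +_V (ν +_H ϱ_r) for suitable partitions μ₁, …, μ_k and a common partition ν. -/

import Mathlib

/-- Sort the parts of a partition in weakly decreasing order. -/
def sortD (s : Multiset ℕ) : List ℕ := (s.sort (· ≤ ·)).reverse

/-- Pad a list with zeros up to length `n`. -/
def padZero (l : List ℕ) (n : ℕ) : List ℕ := l ++ List.replicate (n - l.length) 0

/-- The horizontal sum of two partitions (given as multisets of parts):
add the parts coordinatewise after sorting in decreasing order. -/
def hSum (s t : Multiset ℕ) : Multiset ℕ :=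
  ((List.zipWith (· + ·) (padZero (sortD s) (max (Multiset.card s) (Multiset.card t)))
      (padZero (sortD t) (max (Multiset.card s) (Multiset.card t))) : List ℕ) :
    Multiset ℕ).filter (0 < ·)

/-- The staircase partition `ϱ_r = (r, r-1, …, 1)` as a multiset of parts. -/
def staircase (r : ℕ) : Multiset ℕ := (Multiset.range (r + 1)).filter (0 < ·)

lemma sortD_sorted (s : Multiset ℕ) : (sortD s).Pairwise (· ≥ ·) := by
  unfold sortD
  exact List.pairwise_reverse.mpr ((Multiset.pairwise_sort s (· ≤ ·)).imp fun h => h)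

lemma sortD_length (s : Multiset ℕ) : (sortD s).length = Multiset.card s := by
  simp [sortD]

lemma sort_coe_of_sorted {l : List ℕ} (h : l.Pairwise (· ≤ ·)) :
    (↑l : Multiset ℕ).sort (· ≤ ·) = l := by
  refine List.Perm.eq_of_pairwise' (Multiset.pairwise_sort _ _) h ?_
  exact Multiset.coe_eq_coe.mp (Multiset.sort_eq _ _)

lemma sortD_coe_of_sorted {l : List ℕ} (h : l.Pairwise (· ≥ ·)) : sortD (↑l) = l := by
  have h2 : l.reverse.Pairwise (· ≤ ·) := List.pairwise_reverse.mpr (h.imp fun hh => hh)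
  have h3 : (↑l : Multiset ℕ) = ↑l.reverse := (Multiset.coe_reverse l).symm
  rw [sortD, h3, sort_coe_of_sorted h2, List.reverse_reverse]

lemma sorted_ge_getElem_le {l : List ℕ} (h : l.Pairwise (· ≥ ·)) {i j : ℕ}
    (hij : i ≤ j) (hj : j < l.length) :
    l[j] ≤ l[i]'(lt_of_le_of_lt hij hj) := by
  rcases eq_or_lt_of_le hij with rfl | hlt
  · exact le_refl _
  · exact List.pairwise_iff_getElem.mp h i j _ hj hlt

lemma sorted_ge_getD_le {l : List ℕ} (h : l.Pairwise (· ≥ ·)) {i j : ℕ} (hij : i ≤ j) :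
    l.getD j 0 ≤ l.getD i 0 := by
  rcases lt_or_ge j l.length with hj | hj
  · rw [List.getD_eq_getElem l 0 hj, List.getD_eq_getElem l 0 (lt_of_le_of_lt hij hj)]
    exact sorted_ge_getElem_le h hij hj
  · rw [List.getD_eq_default l 0 hj]
    exact Nat.zero_le _

lemma padZero_length {l : List ℕ} {n : ℕ} (h : l.length ≤ n) :
    (padZero l n).length = n := by
  unfold padZero
  simp
  omega

lemma padZero_sorted {l : List ℕ} (h : l.Pairwise (· ≥ ·)) (n : ℕ) :
    (padZero l n).Pairwise (· ≥ ·) := by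
  unfold padZero
  rw [List.pairwise_append]
  refine ⟨h, by simp, fun a _ b hb => ?_⟩
  rw [List.eq_of_mem_replicate hb]
  exact Nat.zero_le a

lemma padZero_getD (l : List ℕ) (n i : ℕ) : (padZero l n).getD i 0 = l.getD i 0 := by
  unfold padZero
  rcases lt_or_ge i l.length with h | h
  · rw [List.getD_eq_getElem _ 0 (by simp; omega), List.getElem_append_left h,
      List.getD_eq_getElem _ 0 h]
  · rcases lt_or_ge i (l.length + (n - l.length)) with h2 | h2
    · rw [List.getD_eq_getElem _ 0 (by simp; omega), List.getElem_append_right h,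
        List.getElem_replicate, List.getD_eq_default _ 0 h]
    · rw [List.getD_eq_default _ 0 (by simp; omega), List.getD_eq_default _ 0 (by omega)]

lemma zipWith_getD {f : ℕ → ℕ → ℕ} {l l' : List ℕ} {i : ℕ}
    (h1 : i < l.length) (h2 : i < l'.length) :
    (List.zipWith f l l').getD i 0 = f (l.getD i 0) (l'.getD i 0) := by
  rw [List.getD_eq_getElem _ 0 (by simp; omega), List.getElem_zipWith,
    List.getD_eq_getElem l 0 h1, List.getD_eq_getElem l' 0 h2]

lemma staircase_coe (r : ℕ) : staircase r = (↑(List.range' 1 r) : Multiset ℕ) := by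
  unfold staircase
  have h0 : (Multiset.range (r + 1)) = ((List.range (r + 1) : List ℕ) : Multiset ℕ) := rfl
  have h1 : List.range (r + 1) = 0 :: List.range' 1 r := by
    rw [List.range_eq_range', List.range'_succ]
  rw [h0, h1, Multiset.filter_coe]
  congr 1
  rw [List.filter_cons_of_neg (by simp)]
  rw [List.filter_eq_self]
  intro a ha
  rw [List.mem_range'] at ha
  obtain ⟨i, _, rfl⟩ := ha
  simp

lemma staircase_card (r : ℕ) : Multiset.card (staircase r) = r := by
  rw [staircase_coe]; simp

lemma range'_sorted (r : ℕ) : (List.range' 1 r).Pairwise (· ≤ ·) := by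
  rw [List.pairwise_iff_getElem]
  intro i j hi hj hij
  rw [List.getElem_range', List.getElem_range']
  simp at hi hj
  omega

lemma sortD_staircase (r : ℕ) : sortD (staircase r) = (List.range' 1 r).reverse := by
  rw [staircase_coe, sortD, sort_coe_of_sorted (range'_sorted r)]

lemma sortD_staircase_getD {r i : ℕ} (hi : i < r) :
    (sortD (staircase r)).getD i 0 = r - i := by
  rw [sortD_staircase]
  have hlen : ((List.range' 1 r).reverse).length = r := by simp
  rw [List.getD_eq_getElem _ 0 (by omega), List.getElem_reverse, List.getElem_range']
  simp
  omega

lemma filter_pos_pad {m : List ℕ} (h : m.Pairwise (· ≥ ·)) :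
    m.filter (fun x => decide (0 < x)) ++
      List.replicate (m.length - (m.filter (fun x => decide (0 < x))).length) 0 = m := by
  induction m with
  | nil => simp
  | cons a t ih =>
    have ht : t.Pairwise (· ≥ ·) := h.of_cons
    rcases Nat.eq_zero_or_pos a with ha | ha
    · subst ha
      have hall : ∀ x ∈ (0 :: t : List ℕ), x = 0 := by
        intro x hx
        rcases List.mem_cons.mp hx with rfl | hx
        · rfl
        · exact Nat.le_zero.mp (List.rel_of_pairwise_cons h (a' := x) hx)
      have hf : (0 :: t : List ℕ).filter (fun x => decide (0 < x)) = [] := by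
        rw [List.filter_eq_nil_iff]
        intro x hx
        simp [hall x hx]
      rw [hf]
      simp only [List.nil_append, List.length_nil, Nat.sub_zero]
      exact (List.eq_replicate_length.mpr hall).symm
    · rw [List.filter_cons_of_pos (by simpa using ha)]
      have hlen : (t.filter (fun x => decide (0 < x))).length ≤ t.length :=
        List.length_filter_le _ _
      simp only [List.length_cons]
      rw [show t.length + 1 - ((t.filter (fun x => decide (0 < x))).length + 1)
          = t.length - (t.filter (fun x => decide (0 < x))).length by omega]
      rw [List.cons_append, ih ht]

lemma strictDesc_getElem_ge {L : List ℕ} (hs : L.Pairwise (· > ·))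
    (hpos : ∀ x ∈ L, 0 < x) : ∀ i (h : i < L.length), L.length - i ≤ L[i] := by
  induction L with
  | nil => simp
  | cons a t ih =>
    intro i h
    cases i with
    | zero =>
      simp only [List.getElem_cons_zero, List.length_cons]
      cases t with
      | nil =>
        have := hpos a (by simp)
        simp only [List.length_nil]
        omega
      | cons b u =>
        have hb := ih hs.of_cons (fun x hx => hpos x (List.mem_cons_of_mem a hx)) 0 (by simp)
        have hba : b < a := List.rel_of_pairwise_cons hs (a' := b) (by simp)
        simp only [List.getElem_cons_zero, List.length_cons] at hb ⊢
        omega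
    | succ i =>
      have := ih hs.of_cons (fun x hx => hpos x (List.mem_cons_of_mem a hx)) i
        (by simpa using Nat.lt_of_succ_lt_succ h)
      simp only [List.getElem_cons_succ, List.length_cons]
      omega

lemma hSum_of_strictDesc {r : ℕ} {L : List ℕ} (hlen : L.length = r)
    (hs : L.Pairwise (· > ·)) (hpos : ∀ x ∈ L, 0 < x) :
    ∃ ν : Multiset ℕ, (∀ x ∈ ν, 0 < x) ∧ hSum ν (staircase r) = ↑L := by
  classical
  set st : List ℕ := (List.range' 1 r).reverse with hst
  set m : List ℕ := List.zipWith (fun a b => a - b) L st with hm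
  have hstlen : st.length = r := by simp [hst]
  have hmlen : m.length = r := by simp [hm, hstlen, hlen]
  have hstgetD : ∀ i, i < r → st.getD i 0 = r - i := by
    intro i hi
    rw [hst]
    have hlen2 : ((List.range' 1 r).reverse).length = r := by simp
    rw [List.getD_eq_getElem _ 0 (by omega), List.getElem_reverse, List.getElem_range']
    simp
    omega
  have hmgetD : ∀ i, i < r → m.getD i 0 = L.getD i 0 - (r - i) := by
    intro i hi
    rw [hm, zipWith_getD (by omega) (by omega), hstgetD i hi]
  have hLgeD : ∀ i, i < r → r - i ≤ L.getD i 0 := by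
    intro i hi
    have h' : i < L.length := by omega
    rw [List.getD_eq_getElem _ 0 h']
    have := strictDesc_getElem_ge hs hpos i h'
    omega
  have hLdescD : ∀ i, i + 1 < r → L.getD (i + 1) 0 < L.getD i 0 := by
    intro i hi
    rw [List.getD_eq_getElem _ 0 (by omega), List.getD_eq_getElem _ 0 (by omega)]
    exact List.pairwise_iff_getElem.mp hs i (i + 1) (by omega) (by omega) (by omega)
  have hmsorted : m.Pairwise (· ≥ ·) := by
    have hchain : m.IsChain (· ≥ ·) := by
      rw [List.isChain_iff_getElem]
      intro i hi
      have hia : i < m.length := by omega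
      have hib : i + 1 < m.length := by omega
      rw [← List.getD_eq_getElem m 0 hia, ← List.getD_eq_getElem m 0 hib]
      rw [hmgetD i (by omega), hmgetD (i + 1) (by omega)]
      have h1 := hLdescD i (by omega)
      have h2 := hLgeD i (by omega)
      omega
    exact List.isChain_iff_pairwise.mp hchain
  refine ⟨↑(m.filter (fun x => decide (0 < x))), ?_, ?_⟩
  · intro x hx
    rw [Multiset.mem_coe, List.mem_filter] at hx
    simpa using hx.2
  · have hν : sortD ↑(m.filter (fun x => decide (0 < x))) = m.filter (fun x => decide (0 < x)) :=
      sortD_coe_of_sorted (List.Pairwise.filter _ hmsorted)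
    have hmax : max (Multiset.card (↑(m.filter (fun x => decide (0 < x))) : Multiset ℕ))
        (Multiset.card (staircase r)) = r := by
      have hcard : Multiset.card (↑(m.filter (fun x => decide (0 < x))) : Multiset ℕ)
          = (m.filter (fun x => decide (0 < x))).length := by simp
      have hcle := List.length_filter_le (fun x => decide (0 < x)) m
      rw [hcard, staircase_card]
      omega
    unfold hSum
    rw [hmax, hν]
    have hpad1 : padZero (m.filter (fun x => decide (0 < x))) r = m := by
      unfold padZero
      rw [← hmlen]
      exact filter_pos_pad hmsorted
    have hpad2 : padZero (sortD (staircase r)) r = st := by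
      unfold padZero
      rw [sortD_staircase]
      simp [hst]
    rw [hpad1, hpad2]
    have hzip : List.zipWith (· + ·) m st = L := by
      apply List.ext_getElem
      · simp [hmlen, hstlen, hlen]
      · intro i h1 h2
        have hir : i < r := by omega
        rw [← List.getD_eq_getElem _ 0 h1, ← List.getD_eq_getElem _ 0 h2]
        rw [zipWith_getD (by omega) (by omega), hmgetD i hir, hstgetD i hir]
        have := hLgeD i hir
        omega
    rw [hzip, Multiset.filter_eq_self]
    intro a ha
    exact hpos a (by exact_mod_cast ha)

lemma card_toFinset_hSum_staircase (ν : Multiset ℕ) (r : ℕ) :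
    r ≤ (hSum ν (staircase r)).toFinset.card := by
  classical
  set n : ℕ := max (Multiset.card ν) (Multiset.card (staircase r)) with hn
  have hrn : r ≤ n := by rw [hn, staircase_card]; omega
  set a : List ℕ := padZero (sortD ν) n with ha
  set b : List ℕ := padZero (sortD (staircase r)) n with hb
  have halen : a.length = n := by
    rw [ha]; exact padZero_length (by rw [sortD_length]; omega)
  have hblen : b.length = n := by
    rw [hb]; exact padZero_length (by rw [sortD_length, staircase_card]; omega)
  have hasorted : a.Pairwise (· ≥ ·) := padZero_sorted (sortD_sorted ν) n
  have hbgetD : ∀ i, i < r → b.getD i 0 = r - i := by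
    intro i hi
    rw [hb, padZero_getD, sortD_staircase_getD hi]
  set f : Fin r → ℕ := fun i => a.getD i 0 + (r - i) with hf
  have hmem : ∀ i : Fin r, f i ∈ (hSum ν (staircase r)).toFinset := by
    intro i
    rw [Multiset.mem_toFinset]
    unfold hSum
    rw [Multiset.mem_filter]
    constructor
    · rw [← ha, ← hb, Multiset.mem_coe]
      have hilen : (i : ℕ) < (List.zipWith (· + ·) a b).length := by
        rw [List.length_zipWith, halen, hblen]
        have := i.isLt
        omega
      have hgd : (List.zipWith (· + ·) a b).getD i 0 = f i := by
        rw [zipWith_getD (by omega) (by omega), hbgetD i i.isLt]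
      rw [← hgd, List.getD_eq_getElem _ 0 hilen]
      exact List.getElem_mem hilen
    · have := i.isLt
      simp only [hf]
      omega
  have hinj : Function.Injective f := by
    have hlt : ∀ i j : Fin r, i < j → f j < f i := by
      intro i j hij
      have h1 : a.getD j 0 ≤ a.getD i 0 := sorted_ge_getD_le hasorted (le_of_lt hij)
      have h2 : (j : ℕ) < r := j.isLt
      have h3 : (i : ℕ) < (j : ℕ) := hij
      simp only [hf]
      omega
    intro i j hij
    by_contra hne
    rcases lt_or_gt_of_ne hne with h | h
    · have := hlt i j h; omega
    · have := hlt j i h; omega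
  calc r = Fintype.card (Fin r) := (Fintype.card_fin r).symm
    _ = (Finset.univ : Finset (Fin r)).card := (Finset.card_univ).symm
    _ ≤ (hSum ν (staircase r)).toFinset.card :=
        Finset.card_le_card_of_injOn f (fun i _ => hmem i) (hinj.injOn)

/-- Partitions `λ₁, …, λ_k` (possibly of different sizes) share at least `r`
distinct row lengths iff they can be written as `λⱼ = μⱼ +_V (ν +_H ϱ_r)` for
suitable partitions `μ₁, …, μ_k` and a common partition `ν` (the vertical sum
`+_V` being multiset addition of parts). -/
theorem shared_distRows_ge_iff_staircase_decomposition
    (k r : ℕ) (hk : 0 < k) (lam : Fin k → Multiset ℕ)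
    (hpos : ∀ j, ∀ x ∈ lam j, 0 < x) :
    r ≤ (⋂ j, ((lam j).toFinset : Set ℕ)).ncard ↔
      ∃ (μ : Fin k → Multiset ℕ) (ν : Multiset ℕ),
        (∀ j, ∀ x ∈ μ j, 0 < x) ∧ (∀ x ∈ ν, 0 < x) ∧
        ∀ j, lam j = μ j + hSum ν (staircase r) := by
  classical
  set I : Set ℕ := ⋂ j, ((lam j).toFinset : Set ℕ) with hI
  have j0 : Fin k := ⟨0, hk⟩
  have hIfin : I.Finite :=
    Set.Finite.subset ((lam j0).toFinset.finite_toSet) (Set.iInter_subset _ j0)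
  constructor
  · intro h
    obtain ⟨t, htI, htcard⟩ := Set.exists_subset_card_eq h
    have htfin : t.Finite := hIfin.subset htI
    set S : Finset ℕ := htfin.toFinset with hS
    have hScard : S.card = r := by
      rw [hS, ← Set.ncard_eq_toFinset_card t htfin]
      exact htcard
    have hSI : ∀ x ∈ S, x ∈ I := by
      intro x hx
      exact htI (by simpa [hS] using hx)
    set L : List ℕ := (S.sort (· ≤ ·)).reverse with hL
    have hLlen : L.length = r := by
      rw [hL, List.length_reverse, Finset.length_sort]
      exact hScard
    have hLsorted : L.Pairwise (· > ·) := by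
      rw [hL]
      exact List.pairwise_reverse.mpr ((Finset.sortedLT_sort S).pairwise.imp fun h => h)
    have hLmem : ∀ x ∈ L, x ∈ S := by
      intro x hx
      rw [hL, List.mem_reverse, Finset.mem_sort] at hx
      exact hx
    have hLpos : ∀ x ∈ L, 0 < x := by
      intro x hx
      have hxI := hSI x (hLmem x hx)
      have hxl : x ∈ (lam j0).toFinset := by
        have := Set.mem_iInter.mp hxI j0
        simpa using this
      exact hpos j0 x (Multiset.mem_toFinset.mp hxl)
    have hLcoe : (↑L : Multiset ℕ) = S.val := by
      rw [hL, Multiset.coe_reverse]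
      exact Multiset.sort_eq _ _
    obtain ⟨ν, hν, hhs⟩ := hSum_of_strictDesc hLlen hLsorted hLpos
    have hle : ∀ j, S.val ≤ lam j := by
      intro j
      rw [Multiset.le_iff_count]
      intro x
      by_cases hx : x ∈ S.val
      · have h1 : S.val.count x = 1 := Multiset.count_eq_one_of_mem S.nodup hx
        have hxI := hSI x hx
        have hxl : x ∈ lam j := by
          have := Set.mem_iInter.mp hxI j
          simpa using this
        rw [h1]
        exact Multiset.one_le_count_iff_mem.mpr hxl
      · simp [Multiset.count_eq_zero_of_notMem hx]
    refine ⟨fun j => lam j - S.val, ν, ?_, hν, ?_⟩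
    · intro j x hx
      exact hpos j x (Multiset.mem_of_le tsub_le_self hx)
    · intro j
      rw [hhs, hLcoe]
      exact (tsub_add_cancel_of_le (hle j)).symm
  · rintro ⟨μ, ν, hμ, hν, hdec⟩
    have hsub : ((hSum ν (staircase r)).toFinset : Set ℕ) ⊆ I := by
      rw [hI]
      refine Set.subset_iInter fun j => ?_
      intro x hx
      simp only [Finset.coe_sort_coe, Finset.mem_coe, Multiset.mem_toFinset] at hx ⊢
      rw [hdec j]
      exact Multiset.mem_add.mpr (Or.inr hx)
    calc r ≤ (hSum ν (staircase r)).toFinset.card := card_toFinset_hSum_staircase ν r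
      _ = ((hSum ν (staircase r)).toFinset : Set ℕ).ncard := (Set.ncard_coe_finset _).symm
      _ ≤ I.ncard := Set.ncard_le_ncard hsub hIfin
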